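/- Let n ≥ 2 and let H be a real n×n unreduced lower Hessenberg matrix with associated polynomial sequence {q_i}_{0 ≤ i ≤ n}. Then H is diagonalizable over ℝ (i.e. there is an invertible real matrix P and a diagonal real matrix D with H = P D P⁻¹) if and only if q_n has n pairwise distinct real roots (i.e. all roots of the degree-n polynomial q_n are simple and real). -/

import Mathlib

/-!
Write `v(x) = (q_0(x), …, q_{n-1}(x))`. The recursion defining the `q_i` says exactly that
`H v(x) = x v(x) - q_n(x) e`, with `e` the last standard basis vector. Conversely, since `H` is
lower Hessenberg with nonzero superdiagonal, row `k` of `H w = x w` determines `w_{k+1}` from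
`w_0, …, w_k`; so every eigenvector for `x` is `w_0 v(x)`, and then `w_0 q_n(x) = 0`. Hence the
eigenvector matrices of `H` are, up to column scaling, the matrices with columns `v(x_k)` for
roots `x_k` of `q_n`. Such a matrix is a Vandermonde matrix times a triangular matrix with nonzero
diagonal (the coefficients of the `q_i`), so it is invertible iff the `x_k` are pairwise distinct.
-/

/-- The superdiagonal entry `h_{i+1, i+2}` (1-based) of `H`, with the convention
`h_{n, n+1} = 1`.  Here `i` is 0-based. -/
def superEntry {n : ℕ} (H : Matrix (Fin n) (Fin n) ℝ) (i : ℕ) : ℝ :=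
  if h : i + 1 < n then H ⟨i, by omega⟩ ⟨i + 1, h⟩ else 1

/-- The entry `h_{i+1, j+1}` (1-based) of `H`, with `0` outside the matrix.
Here `i, j` are 0-based. -/
def lowEntry {n : ℕ} (H : Matrix (Fin n) (Fin n) ℝ) (i j : ℕ) : ℝ :=
  if h : i < n ∧ j < n then H ⟨i, h.1⟩ ⟨j, h.2⟩ else 0

/-- `H` is an unreduced lower Hessenberg matrix: `h_{ij} = 0` for `j > i + 1`
(1-based), and all superdiagonal entries `h_{i,i+1}` are nonzero. -/
def IsUnreducedLowerHessenberg {n : ℕ} (H : Matrix (Fin n) (Fin n) ℝ) : Prop :=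
  (∀ i j : Fin n, (i : ℕ) + 1 < (j : ℕ) → H i j = 0) ∧
  (∀ i : ℕ, ∀ h : i + 1 < n, H ⟨i, by omega⟩ ⟨i + 1, h⟩ ≠ 0)

/-- The associated polynomial sequence of a matrix `H` (intended: unreduced lower
Hessenberg): `q 0 = 1` and
`q (i+1) = (1 / h_{i+1,i+2}) * (X * q i − ∑_{j=0}^{i} h_{i+1,j+1} * q j)`
(1-based entries), with the convention `h_{n,n+1} = 1`. -/
noncomputable def assocPoly {n : ℕ} (H : Matrix (Fin n) (Fin n) ℝ) : ℕ → Polynomial ℝ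
  | 0 => 1
  | i + 1 =>
      Polynomial.C (superEntry H i)⁻¹ *
        (Polynomial.X * assocPoly H i -
          ∑ j : Fin (i + 1), Polynomial.C (lowEntry H i j) * assocPoly H j)


open Polynomial Matrix Finset

namespace Polynomial

theorem card_roots_eq_and_nodup_iff_exists_injective {R : Type*} [CommRing R] [IsDomain R]
    {p : R[X]} {n : ℕ} (hp : p ≠ 0) (hn : p.natDegree = n) :
    (Multiset.card p.roots = n ∧ p.roots.Nodup) ↔
      ∃ d : Fin n → R, Function.Injective d ∧ ∀ k, p.IsRoot (d k) := by
  classical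
  constructor
  · rintro ⟨hcard, hnodup⟩
    have hs : Fintype.card p.roots.toFinset = n := by
      rw [Fintype.card_coe, Multiset.toFinset_card_of_nodup hnodup, hcard]
    let e := (Fintype.equivFinOfCardEq hs).symm
    exact ⟨fun k => e k, Subtype.val_injective.comp e.injective,
      fun k => (mem_roots hp).1 (Multiset.mem_toFinset.1 (e k).2)⟩
  · rintro ⟨d, hd, hroot⟩
    let s := univ.map ⟨d, hd⟩
    have hs : s.card = n := by rw [card_map, card_univ, Fintype.card_fin]
    have hle : s.val ≤ p.roots := (Multiset.le_iff_subset s.nodup).2 fun x hx => by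
      obtain ⟨k, -, rfl⟩ := mem_map.1 (show x ∈ s from hx)
      exact (mem_roots hp).2 (hroot k)
    have heq : s.val = p.roots := Multiset.eq_of_le_of_card_le hle <| by
      rw [← card_val] at hs
      rw [hs, ← hn]
      exact card_roots' p
    exact heq ▸ ⟨hs, s.nodup⟩

end Polynomial

namespace Matrix

variable {R : Type*} [CommRing R] {n : ℕ}

theorem det_eval_matrixOfPolynomials (v : Fin n → R) (p : Fin n → R[X])
    (h_deg : ∀ i, (p i).natDegree ≤ i) :
    (of fun i j => (p j).eval (v i)).det = (vandermonde v).det * ∏ i, (p i).coeff i := by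
  rw [eval_matrixOfPolynomials_eq_vandermonde_mul_matrixOfPolynomials v p h_deg, det_mul,
    det_of_isUpperTriangular (matrixOfPolynomials_blockTriangular p h_deg)]
  rfl

theorem det_eval_matrixOfPolynomials_ne_zero_iff [IsDomain R] (v : Fin n → R) {p : Fin n → R[X]}
    (h_deg : ∀ i, (p i).natDegree = i) (hp : ∀ i, p i ≠ 0) :
    (of fun i j => (p j).eval (v i)).det ≠ 0 ↔ Function.Injective v := by
  have hcoeff : ∏ i, (p i).coeff i ≠ 0 := prod_ne_zero_iff.2 fun i _ => by
    simpa only [← h_deg i, coeff_natDegree] using leadingCoeff_ne_zero.2 (hp i)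
  rw [det_eval_matrixOfPolynomials v p fun i => (h_deg i).le, mul_ne_zero_iff,
    det_vandermonde_ne_zero_iff, and_iff_left hcoeff]

theorem exists_isDiag_eq_mul_mul_inv_iff {m : Type*} [Fintype m] [DecidableEq m]
    (A : Matrix m m R) :
    (∃ P D : Matrix m m R, IsUnit P.det ∧ D.IsDiag ∧ A = P * D * P⁻¹) ↔
      ∃ (P : Matrix m m R) (d : m → R), IsUnit P.det ∧ A * P = P * diagonal d := by
  constructor
  · rintro ⟨P, D, hP, hD, rfl⟩
    exact ⟨P, D.diag, hP, by rw [hD.diagonal_diag]; exact nonsing_inv_mul_cancel_right P _ hP⟩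
  · rintro ⟨P, d, hP, hAP⟩
    refine ⟨P, diagonal d, hP, isDiag_diagonal d, ?_⟩
    rw [← hAP, mul_nonsing_inv_cancel_right P _ hP]

end Matrix

def IsLowerHessenberg {n : ℕ} (H : Matrix (Fin n) (Fin n) ℝ) : Prop :=
  ∀ i j : Fin n, (i : ℕ) + 1 < (j : ℕ) → H i j = 0

noncomputable def assocVec {n : ℕ} (H : Matrix (Fin n) (Fin n) ℝ) (x : ℝ) : Fin n → ℝ :=
  fun j => (assocPoly H j).eval x

noncomputable def assocMatrix {n : ℕ} (H : Matrix (Fin n) (Fin n) ℝ) (d : Fin n → ℝ) :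
    Matrix (Fin n) (Fin n) ℝ :=
  of fun j k => (assocPoly H j).eval (d k)

section Hessenberg

variable {n : ℕ} {H : Matrix (Fin n) (Fin n) ℝ}

theorem lowEntry_val (i j : Fin n) : lowEntry H i j = H i j := by
  simp [lowEntry]

theorem lowEntry_of_le {i j : ℕ} (hj : n ≤ j) : lowEntry H i j = 0 := by
  rw [lowEntry, dif_neg (by omega)]

theorem lowEntry_succ {i : ℕ} (hi : i + 1 < n) : lowEntry H i (i + 1) = superEntry H i := by
  rw [lowEntry, superEntry, dif_pos ⟨by omega, hi⟩, dif_pos hi]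

theorem superEntry_of_le {i : ℕ} (hi : n ≤ i + 1) : superEntry H i = 1 := by
  rw [superEntry, dif_neg (by omega)]

theorem IsLowerHessenberg.lowEntry_eq_zero (hH : IsLowerHessenberg H) {i j : ℕ}
    (hij : i + 1 < j) : lowEntry H i j = 0 := by
  unfold lowEntry
  split_ifs with h
  · exact hH _ _ hij
  · rfl

theorem IsLowerHessenberg.sum_mul_eq (hH : IsLowerHessenberg H) (i : Fin n) (g : ℕ → ℝ) :
    ∑ j : Fin n, H i j * g j = ∑ j ∈ range (i + 2), lowEntry H i j * g j := by
  calc ∑ j : Fin n, H i j * g j = ∑ j ∈ range n, lowEntry H i j * g j := by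
        simp_rw [← lowEntry_val]
        exact Fin.sum_univ_eq_sum_range (fun j => lowEntry H i j * g j) n
    _ = ∑ j ∈ range (n + 1), lowEntry H i j * g j := by
        rw [sum_range_succ, lowEntry_of_le le_rfl, zero_mul, add_zero]
    _ = ∑ j ∈ range (i + 2), lowEntry H i j * g j := by
        refine (sum_subset (range_subset_range.2 (by omega)) fun j _ hj => ?_).symm
        rw [mem_range, not_lt] at hj
        rw [hH.lowEntry_eq_zero (by omega), zero_mul]

theorem IsUnreducedLowerHessenberg.isLowerHessenberg (hH : IsUnreducedLowerHessenberg H) :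
    IsLowerHessenberg H :=
  hH.1

theorem IsUnreducedLowerHessenberg.superEntry_ne_zero (hH : IsUnreducedLowerHessenberg H)
    (i : ℕ) : superEntry H i ≠ 0 := by
  unfold superEntry
  split_ifs with h
  · exact hH.2 i h
  · exact one_ne_zero

theorem natDegree_assocPoly_le (H : Matrix (Fin n) (Fin n) ℝ) (i : ℕ) :
    (assocPoly H i).natDegree ≤ i := by
  induction i using Nat.strong_induction_on with
  | _ i ih =>
    rcases i with _ | i
    · simp [assocPoly]
    rw [assocPoly]
    refine natDegree_C_mul_le _ _ |>.trans <| (natDegree_sub_le _ _).trans (max_le ?_ ?_)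
    · exact (natDegree_mul_le_of_le natDegree_X_le (ih i i.lt_succ_self)).trans_eq (add_comm _ _)
    · refine natDegree_sum_le_of_forall_le _ _ fun j _ => natDegree_C_mul_le _ _ |>.trans ?_
      exact (ih j (by omega)).trans (by omega)

theorem coeff_assocPoly_self (H : Matrix (Fin n) (Fin n) ℝ) (i : ℕ) :
    (assocPoly H i).coeff i = ∏ j ∈ range i, (superEntry H j)⁻¹ := by
  induction i with
  | zero => simp [assocPoly]
  | succ i ih =>
    have hlow : ∀ j : Fin (i + 1), (assocPoly H j).coeff (i + 1) = 0 := fun j =>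
      coeff_eq_zero_of_natDegree_lt ((natDegree_assocPoly_le H j).trans_lt j.2)
    rw [assocPoly, prod_range_succ, coeff_C_mul, coeff_sub, coeff_X_mul, ih, finsetSum_coeff]
    simp [hlow, mul_comm]

theorem IsUnreducedLowerHessenberg.coeff_assocPoly_self_ne_zero
    (hH : IsUnreducedLowerHessenberg H) (i : ℕ) : (assocPoly H i).coeff i ≠ 0 := by
  rw [coeff_assocPoly_self]
  exact prod_ne_zero_iff.2 fun j _ => inv_ne_zero (hH.superEntry_ne_zero j)

theorem IsUnreducedLowerHessenberg.natDegree_assocPoly (hH : IsUnreducedLowerHessenberg H)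
    (i : ℕ) : (assocPoly H i).natDegree = i :=
  natDegree_eq_of_le_of_coeff_ne_zero (natDegree_assocPoly_le H i)
    (hH.coeff_assocPoly_self_ne_zero i)

theorem IsUnreducedLowerHessenberg.assocPoly_ne_zero (hH : IsUnreducedLowerHessenberg H)
    (i : ℕ) : assocPoly H i ≠ 0 := fun h =>
  hH.coeff_assocPoly_self_ne_zero i (by rw [h, coeff_zero])

theorem C_superEntry_mul_assocPoly_succ {i : ℕ} (hi : superEntry H i ≠ 0) :
    C (superEntry H i) * assocPoly H (i + 1) =
      X * assocPoly H i - ∑ j ∈ range (i + 1), C (lowEntry H i j) * assocPoly H j := by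
  rw [assocPoly, ← mul_assoc, ← C_mul, mul_inv_cancel₀ hi, C_1, one_mul,
    Fin.sum_univ_eq_sum_range (fun j => C (lowEntry H i j) * assocPoly H j)]

theorem IsUnreducedLowerHessenberg.mulVec_assocVec (hH : IsUnreducedLowerHessenberg H) (x : ℝ)
    (i : Fin n) :
    (H *ᵥ assocVec H x) i =
      x * assocVec H x i - if (i : ℕ) + 1 = n then (assocPoly H n).eval x else 0 := by
  have hrec := congrArg (eval x) (C_superEntry_mul_assocPoly_succ (hH.superEntry_ne_zero i))
  simp only [eval_mul, eval_C, eval_sub, eval_X, eval_finsetSum] at hrec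
  simp only [mulVec, dotProduct, assocVec]
  rw [hH.isLowerHessenberg.sum_mul_eq i fun j => (assocPoly H j).eval x, sum_range_succ]
  split_ifs with hi
  · rw [superEntry_of_le hi.ge, congrArg (assocPoly H) hi] at hrec
    rw [lowEntry_of_le hi.ge]
    linarith
  · rw [lowEntry_succ (by omega)]
    linarith

theorem IsUnreducedLowerHessenberg.eq_zero_of_mulVec_apply_eq [NeZero n]
    (hH : IsUnreducedLowerHessenberg H) {x : ℝ} {u : Fin n → ℝ}
    (hu : ∀ i : Fin n, (i : ℕ) + 1 < n → (H *ᵥ u) i = x * u i) (h0 : u 0 = 0) : u = 0 := by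
  suffices ∀ k (hk : k < n), u ⟨k, hk⟩ = 0 from funext fun i => this i i.2
  intro k
  induction k using Nat.strong_induction_on with
  | _ k ih =>
    intro hk
    rcases k with _ | k
    · exact h0
    have hrow := hu ⟨k, by omega⟩ hk
    rw [ih k k.lt_succ_self, mul_zero, mulVec, dotProduct, sum_eq_single ⟨k + 1, hk⟩] at hrow
    · exact (mul_eq_zero.1 hrow).resolve_left (hH.2 k hk)
    · intro j _ hj
      rcases lt_or_gt_of_ne (Fin.val_ne_of_ne hj) with hlt | hgt
      · rw [ih j hlt j.2, mul_zero]
      · rw [hH.isLowerHessenberg _ _ hgt, zero_mul]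
    · exact fun h => (h (mem_univ _)).elim

theorem IsUnreducedLowerHessenberg.exists_eq_smul_assocVec (hH : IsUnreducedLowerHessenberg H)
    {x : ℝ} {w : Fin n → ℝ} (hw : H *ᵥ w = x • w) :
    ∃ c : ℝ, w = c • assocVec H x ∧ c * (assocPoly H n).eval x = 0 := by
  rcases eq_or_ne n 0 with rfl | hn
  · exact ⟨0, Subsingleton.elim _ _, zero_mul _⟩
  have : NeZero n := ⟨hn⟩
  have hv := hH.mulVec_assocVec x
  have hw0 : w = w 0 • assocVec H x := by
    rw [← sub_eq_zero]
    refine hH.eq_zero_of_mulVec_apply_eq (x := x) (fun i hi => ?_) ?_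
    · simp only [mulVec_sub, mulVec_smul, hw, hv, Pi.sub_apply, Pi.smul_apply, smul_eq_mul,
        if_neg hi.ne]
      ring
    · simp [assocVec, assocPoly]
  refine ⟨w 0, hw0, ?_⟩
  have hlast := congrFun hw ⟨n - 1, by omega⟩
  rw [hw0, mulVec_smul] at hlast
  simp only [Pi.smul_apply, smul_eq_mul, hv, if_pos (Nat.sub_add_cancel NeZero.one_le)] at hlast
  linarith

theorem IsUnreducedLowerHessenberg.exists_eq_assocMatrix_mul_diagonal
    (hH : IsUnreducedLowerHessenberg H) {P : Matrix (Fin n) (Fin n) ℝ} {d : Fin n → ℝ}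
    (hHP : H * P = P * diagonal d) :
    ∃ c : Fin n → ℝ, P = assocMatrix H d * diagonal c ∧
      ∀ k, c k * (assocPoly H n).eval (d k) = 0 := by
  have hcol : ∀ k, H *ᵥ (fun j => P j k) = d k • fun j => P j k := fun k => funext fun i => by
    have hik := congrFun (congrFun hHP i) k
    rw [mul_diagonal, mul_apply] at hik
    rw [mulVec, dotProduct, hik, Pi.smul_apply, smul_eq_mul, mul_comm]
  choose c hc hroot using fun k => hH.exists_eq_smul_assocVec (hcol k)
  refine ⟨c, ?_, hroot⟩
  ext j k
  simpa [assocMatrix, assocVec, mul_comm] using congrFun (hc k) j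

theorem IsUnreducedLowerHessenberg.mul_assocMatrix (hH : IsUnreducedLowerHessenberg H)
    {d : Fin n → ℝ} (hd : ∀ k, (assocPoly H n).IsRoot (d k)) :
    H * assocMatrix H d = assocMatrix H d * diagonal d := by
  ext i k
  have := hH.mulVec_assocVec (d k) i
  rw [(hd k).eq_zero, ite_self, sub_zero] at this
  rw [mul_diagonal, mul_apply]
  simpa [mulVec, dotProduct, assocMatrix, assocVec, mul_comm] using this

theorem IsUnreducedLowerHessenberg.det_assocMatrix_ne_zero_iff
    (hH : IsUnreducedLowerHessenberg H) {d : Fin n → ℝ} :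
    (assocMatrix H d).det ≠ 0 ↔ Function.Injective d := by
  rw [assocMatrix, ← det_transpose]
  exact det_eval_matrixOfPolynomials_ne_zero_iff d (fun j => hH.natDegree_assocPoly j)
    fun j => hH.assocPoly_ne_zero j

end Hessenberg

theorem hessenberg_diagonalizable_iff_assocPoly_distinct_real_roots_general
    (n : ℕ)
    (H : Matrix (Fin n) (Fin n) ℝ) (hH : IsUnreducedLowerHessenberg H) :
    (∃ P D : Matrix (Fin n) (Fin n) ℝ, IsUnit P.det ∧ D.IsDiag ∧ H = P * D * P⁻¹) ↔
    (Multiset.card (assocPoly H n).roots = n ∧ (assocPoly H n).roots.Nodup) := by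
  rw [exists_isDiag_eq_mul_mul_inv_iff, Polynomial.card_roots_eq_and_nodup_iff_exists_injective
    (hH.assocPoly_ne_zero n) (hH.natDegree_assocPoly n)]
  constructor
  · rintro ⟨P, d, hP, hHP⟩
    obtain ⟨c, rfl, hroot⟩ := hH.exists_eq_assocMatrix_mul_diagonal hHP
    rw [det_mul, det_diagonal, isUnit_iff_ne_zero, mul_ne_zero_iff, prod_ne_zero_iff] at hP
    exact ⟨d, hH.det_assocMatrix_ne_zero_iff.1 hP.1,
      fun k => (mul_eq_zero.1 (hroot k)).resolve_left (hP.2 k (mem_univ k))⟩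
  · rintro ⟨d, hd, hroot⟩
    exact ⟨assocMatrix H d, d, (hH.det_assocMatrix_ne_zero_iff.2 hd).isUnit,
      hH.mul_assocMatrix hroot⟩

/-- **Hyperbolicity criterion in terms of the associated polynomial.**
A real `n × n` unreduced lower Hessenberg matrix `H` is diagonalizable over `ℝ`
(there exist an invertible real matrix `P` and a diagonal real matrix `D` with
`H = P * D * P⁻¹`) if and only if its last associated polynomial `q_n` has `n`
pairwise distinct real roots (all roots of `q_n` are simple and real). -/
theorem hessenberg_diagonalizable_iff_assocPoly_distinct_real_roots
    (n : ℕ) (hn : 2 ≤ n)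
    (H : Matrix (Fin n) (Fin n) ℝ) (hH : IsUnreducedLowerHessenberg H) :
    (∃ P D : Matrix (Fin n) (Fin n) ℝ, IsUnit P.det ∧ D.IsDiag ∧ H = P * D * P⁻¹) ↔
    (Multiset.card (assocPoly H n).roots = n ∧ (assocPoly H n).roots.Nodup) :=
  hessenberg_diagonalizable_iff_assocPoly_distinct_real_roots_general n H hH
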